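/- (1) For all x, y ∈ ℝ^d one has f(x+y) ≥ f(x)·f(y). (2) There is a constant C > 0 (depending only on d and l) such that for all ρ > 0: vol(S^{d−1}) · (1+ρ)^{−d·l_d/2} ≤ ∫_{S^{d−1}} f(ρω) dμ(ω) ≤ C · (1+ρ)^{1 − d − l₁/2}. -/

import Mathlib

/-
Part (1) is the elementary inequality `1 + |a + b| ≤ (1 + |a|) (1 + |b|)`, raised to the
negative powers `-l_j / 2` coordinate by coordinate.

On the sphere every coordinate of `ρω` has absolute value at most `ρ`, which gives the lower
bound. For the upper bound with `ρ ≥ 1`, `f` decreases in each `|x_j|`, so polar coordinates give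
`(ρ/2)^d ∫ f(ρω) dμ(ω) ≤ ∫_{|x| > ρ/2} f`. A point with `|x| > ρ/2` has a coordinate with
`|x_j| > ρ/(2√d)`, and the integral of `f` over such a slab factorises into a one-dimensional
tail `≲ ρ^{1 - l_j/2} ≤ ρ^{1 - l₁/2}` and `d - 1` full integrals, each at most `4` since
`l_j ≥ 4`. For `ρ ≤ 1` the bound `f ≤ 1` suffices.
-/

open MeasureTheory

namespace Stmt9

variable (d : ℕ) (l : Fin d → ℝ)

/-- `f(x) = ∏_{j=1}^d (1+|x_j|)^{−l_j/2}`. -/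
noncomputable def f (x : EuclideanSpace ℝ (Fin d)) : ℝ :=
  ∏ j, (1 + |x j|) ^ (-(l j) / 2)

/-- The Euclidean surface measure `μ` on the unit sphere `S^{d−1} ⊂ ℝ^d`. -/
noncomputable def sphμ : Measure (Metric.sphere (0 : EuclideanSpace ℝ (Fin d)) 1) :=
  (volume : Measure (EuclideanSpace ℝ (Fin d))).toSphere

open Set Metric
open scoped ENNReal

theorem one_add_abs_add_le_mul (a b : ℝ) : 1 + |a + b| ≤ (1 + |a|) * (1 + |b|) := by
  nlinarith [abs_add_le a b, abs_nonneg a, abs_nonneg b]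

section OneDimensional

variable {p : ℝ}

theorem integrable_one_add_abs_rpow (hp : p < -1) : Integrable fun t : ℝ => (1 + |t|) ^ p := by
  simpa using integrable_one_add_norm (E := ℝ) (μ := volume) (r := -p) (by simp; linarith)

theorem one_add_abs_rpow_le_inv_one_add_sq (hp : p ≤ -2) (t : ℝ) :
    (1 + |t|) ^ p ≤ (1 + t ^ 2)⁻¹ :=
  calc (1 + |t|) ^ p ≤ (1 + |t|) ^ (-2 : ℝ) :=
        Real.rpow_le_rpow_of_exponent_le (by linarith [abs_nonneg t]) hp
    _ = ((1 + |t|) ^ 2)⁻¹ := by rw [Real.rpow_neg (by positivity)]; norm_cast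
    _ ≤ (1 + t ^ 2)⁻¹ := inv_anti₀ (by positivity) (by nlinarith [abs_nonneg t, sq_abs t])

theorem integral_one_add_abs_rpow_le_four (hp : p ≤ -2) : ∫ t : ℝ, (1 + |t|) ^ p ≤ 4 :=
  calc ∫ t : ℝ, (1 + |t|) ^ p ≤ ∫ t : ℝ, (1 + t ^ 2)⁻¹ :=
        integral_mono (integrable_one_add_abs_rpow (by linarith)) integrable_inv_one_add_sq
          (one_add_abs_rpow_le_inv_one_add_sq hp)
    _ ≤ 4 := integral_univ_inv_one_add_sq ▸ Real.pi_le_four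

theorem setIntegral_lt_abs_one_add_abs_rpow_le (hp : p ≤ -2) {b : ℝ} (hb : 0 < b) :
    ∫ t in {t : ℝ | b < |t|}, (1 + |t|) ^ p ≤ 2 * b ^ (p + 1) := by
  have hp1 : p < -1 := by linarith
  have hindicator : ({t : ℝ | b < |t|}.indicator fun t => (1 + |t|) ^ p)
      = fun t => (Ioi b).indicator (fun u => (1 + u) ^ p) |t| := by
    ext t
    by_cases h : b < |t| <;> simp [indicator, h]
  have hsymm : ∫ t in {t : ℝ | b < |t|}, (1 + |t|) ^ p = 2 * ∫ u in Ioi b, (1 + u) ^ p := by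
    rw [← integral_indicator (measurableSet_lt measurable_const continuous_abs.measurable),
      hindicator, integral_comp_abs, integral_indicator measurableSet_Ioi,
      Measure.restrict_restrict measurableSet_Ioi,
      inter_eq_self_of_subset_left (Ioi_subset_Ioi hb.le)]
  have hintegrable : IntegrableOn (fun u : ℝ => (1 + u) ^ p) (Ioi b) := by
    simpa [add_comm] using integrableOn_add_rpow_Ioi_of_lt hp1 (m := 1) (by linarith)
  have hcompare : ∫ u in Ioi b, (1 + u) ^ p ≤ ∫ u in Ioi b, u ^ p :=
    setIntegral_mono_on hintegrable (integrableOn_Ioi_rpow_of_lt hp1 hb) measurableSet_Ioi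
      fun u hu => Real.rpow_le_rpow_of_nonpos (hb.trans hu) (by linarith) (by linarith)
  have hpower : -b ^ (p + 1) / (p + 1) ≤ b ^ (p + 1) := by
    rw [div_le_iff_of_neg (by linarith)]
    nlinarith [Real.rpow_nonneg hb.le (p + 1)]
  rw [integral_Ioi_rpow_of_lt hp1 hb] at hcompare
  linarith

theorem integral_indicator_lt_abs_one_add_abs_rpow_le {q : ℝ} (hq : q ≤ -2) (hpq : p ≤ q)
    {b : ℝ} (hb : 0 < b) :
    ∫ t, {t : ℝ | b < |t|}.indicator (fun t => (1 + |t|) ^ p) t ≤ 2 * b ^ (q + 1) := by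
  have htail : MeasurableSet {t : ℝ | b < |t|} :=
    measurableSet_lt measurable_const continuous_abs.measurable
  calc ∫ t, {t : ℝ | b < |t|}.indicator (fun t => (1 + |t|) ^ p) t
      ≤ ∫ t in {t : ℝ | b < |t|}, (1 + |t|) ^ q := by
        rw [← integral_indicator htail]
        refine integral_mono ((integrable_one_add_abs_rpow (by linarith)).indicator htail)
          ((integrable_one_add_abs_rpow (by linarith)).indicator htail)
          fun t => indicator_le_indicator ?_
        exact Real.rpow_le_rpow_of_exponent_le (by linarith [abs_nonneg t]) hpq
    _ ≤ 2 * b ^ (q + 1) := setIntegral_lt_abs_one_add_abs_rpow_le hq hb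

end OneDimensional

theorem lintegral_ofReal_prod_eq {ι : Type*} [Fintype ι] {g : ι → ℝ → ℝ}
    (hg : ∀ k, Integrable (g k)) (hg0 : ∀ k t, 0 ≤ g k t) :
    ∫⁻ x : EuclideanSpace ℝ ι, ENNReal.ofReal (∏ k, g k (x k))
      = ENNReal.ofReal (∏ k, ∫ t, g k t) := by
  refine ((EuclideanSpace.volume_preserving_symm_measurableEquiv_toLp ι).lintegral_comp_emb
      (MeasurableEquiv.measurableEmbedding _) fun y => ENNReal.ofReal (∏ k, g k (y k))).trans ?_
  rw [volume_pi, ← ofReal_integral_eq_lintegral_ofReal (Integrable.fintype_prod hg)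
      (ae_of_all _ fun y => Finset.prod_nonneg fun k _ => hg0 k (y k)),
    integral_fintype_prod_eq_prod]

section Polar

variable {E : Type*} [NormedAddCommGroup E] [NormedSpace ℝ E] [FiniteDimensional ℝ E]
  [MeasurableSpace E] [BorelSpace E] [Nontrivial E] (μ : Measure E) [μ.IsAddHaarMeasure]

theorem lintegral_eq_lintegral_toSphere_lintegral_Ioi {F : E → ℝ≥0∞} (hF : Measurable F) :
    ∫⁻ x, F x ∂μ = ∫⁻ ω : sphere (0 : E) 1, (∫⁻ r in Ioi (0 : ℝ),
      ENNReal.ofReal (r ^ (Module.finrank ℝ E - 1)) * F (r • (ω : E))) ∂μ.toSphere := by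
  have hG : Measurable fun p : sphere (0 : E) 1 × Ioi (0 : ℝ) => F ((p.2 : ℝ) • (p.1 : E)) :=
    hF.comp (by fun_prop)
  have hpolar : ∀ x : ({0}ᶜ : Set E), F (((homeomorphUnitSphereProd E x).2 : ℝ) •
      ((homeomorphUnitSphereProd E x).1 : E)) = F x := fun x => by
    simp [smul_smul, mul_inv_cancel₀ (norm_ne_zero_iff.2 x.2)]
  conv_lhs => rw [← restrict_compl_singleton (μ := μ) 0]
  rw [← lintegral_subtype_comap (measurableSet_singleton 0).compl, ← funext hpolar,
    (Measure.measurePreserving_homeomorphUnitSphereProd μ).lintegral_comp hG,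
    lintegral_prod _ hG.aemeasurable]
  refine lintegral_congr fun ω => ?_
  have hFω : Measurable fun r : Ioi (0 : ℝ) => F ((r : ℝ) • (ω : E)) := hF.comp (by fun_prop)
  rw [Measure.volumeIoiPow, lintegral_withDensity_eq_lintegral_mul _ (by fun_prop) hFω,
    ← lintegral_subtype_comap measurableSet_Ioi]
  rfl

end Polar

section Weight

variable {d l}

theorem f_nonneg (x : EuclideanSpace ℝ (Fin d)) : 0 ≤ f d l x :=
  Finset.prod_nonneg fun j _ => by positivity

theorem continuous_f : Continuous (f d l) :=
  continuous_finsetProd _ fun j _ =>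
    (by fun_prop : Continuous fun x : EuclideanSpace ℝ (Fin d) => 1 + |x j|).rpow_const
      fun x => Or.inl (by positivity)

variable (hl : ∀ j, 0 ≤ l j)
include hl

theorem f_le_of_abs_le {x y : EuclideanSpace ℝ (Fin d)} (h : ∀ j, |x j| ≤ |y j|) :
    f d l y ≤ f d l x :=
  Finset.prod_le_prod (fun j _ => by positivity) fun j _ =>
    Real.rpow_le_rpow_of_nonpos (by positivity) (by linarith [h j]) (by linarith [hl j])

theorem f_le_one (x : EuclideanSpace ℝ (Fin d)) : f d l x ≤ 1 := by
  simpa [f] using f_le_of_abs_le hl (x := 0) (y := x) fun j => by simp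

theorem f_mul_le_f_add (x y : EuclideanSpace ℝ (Fin d)) : f d l x * f d l y ≤ f d l (x + y) := by
  rw [f, f, f, ← Finset.prod_mul_distrib]
  refine Finset.prod_le_prod (fun j _ => by positivity) fun j _ => ?_
  rw [← Real.mul_rpow (by positivity) (by positivity)]
  exact Real.rpow_le_rpow_of_nonpos (by positivity) (one_add_abs_add_le_mul _ _)
    (by linarith [hl j])

theorem rpow_le_f_of_abs_le {L ρ : ℝ} (hL : ∀ j, l j ≤ L) (hρ : 0 ≤ ρ)
    {x : EuclideanSpace ℝ (Fin d)} (hx : ∀ j, |x j| ≤ ρ) :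
    (1 + ρ) ^ (-(d : ℝ) * L / 2) ≤ f d l x := by
  have hfactor : ∀ j, (1 + ρ) ^ (-L / 2) ≤ (1 + |x j|) ^ (-(l j) / 2) := fun j =>
    calc (1 + ρ) ^ (-L / 2) ≤ (1 + ρ) ^ (-(l j) / 2) :=
          Real.rpow_le_rpow_of_exponent_le (by linarith) (by linarith [hL j])
      _ ≤ (1 + |x j|) ^ (-(l j) / 2) :=
          Real.rpow_le_rpow_of_nonpos (by positivity) (by linarith [hx j]) (by linarith [hl j])
  calc (1 + ρ) ^ (-(d : ℝ) * L / 2) = ∏ _j : Fin d, (1 + ρ) ^ (-L / 2) := by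
        rw [Finset.prod_const, Finset.card_univ, Fintype.card_fin, ← Real.rpow_mul_natCast
          (by linarith)]
        ring_nf
    _ ≤ f d l x := Finset.prod_le_prod (fun j _ => by positivity) fun j _ => hfactor j

end Weight

section Tail

variable {d l}

theorem exists_lt_abs_of_sqrt_mul_lt_norm {b : ℝ} (hb : 0 ≤ b) {x : EuclideanSpace ℝ (Fin d)}
    (hx : √d * b < ‖x‖) : ∃ j, b < |x j| := by
  by_contra! h
  refine hx.not_ge ?_
  rw [EuclideanSpace.norm_eq, ← Real.sqrt_sq hb, ← Real.sqrt_mul (Nat.cast_nonneg _)]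
  refine Real.sqrt_le_sqrt ?_
  calc ∑ i, ‖x i‖ ^ 2 ≤ ∑ _i : Fin d, b ^ 2 :=
        Finset.sum_le_sum fun i _ => pow_le_pow_left₀ (norm_nonneg _) (h i) 2
    _ = d * b ^ 2 := by simp

theorem indicator_lt_abs_apply_f_eq_prod (b : ℝ) (j : Fin d) :
    {x : EuclideanSpace ℝ (Fin d) | b < |x j|}.indicator (fun x => ENNReal.ofReal (f d l x))
      = fun x => ENNReal.ofReal (∏ k, Function.update (fun k t => (1 + |t|) ^ (-(l k) / 2)) j
          ({t | b < |t|}.indicator fun t => (1 + |t|) ^ (-(l j) / 2)) k (x k)) := by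
  ext x
  by_cases hx : b < |x j|
  · rw [indicator_of_mem (show x ∈ {x : EuclideanSpace ℝ (Fin d) | b < |x j|} from hx), f]
    congr 1
    refine Finset.prod_congr rfl fun k _ => ?_
    rcases eq_or_ne k j with rfl | hk
    · simp [hx]
    · simp [Function.update_of_ne hk]
  · rw [indicator_of_notMem (show x ∉ {x : EuclideanSpace ℝ (Fin d) | b < |x j|} from hx),
      Finset.prod_eq_zero (Finset.mem_univ j) (by simp [hx]), ENNReal.ofReal_zero]

variable {L : ℝ} (hL : 4 ≤ L) (hLl : ∀ j, L ≤ l j)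
include hL hLl

theorem setLIntegral_lt_abs_apply_le {b : ℝ} (hb : 0 < b) (j : Fin d) :
    ∫⁻ x in {x : EuclideanSpace ℝ (Fin d) | b < |x j|}, ENNReal.ofReal (f d l x)
      ≤ ENNReal.ofReal (2 * b ^ (1 - L / 2) * 4 ^ (d - 1)) := by
  have hexp : ∀ k, -(l k) / 2 ≤ -2 := fun k => by linarith [hLl k]
  have htail : MeasurableSet {t : ℝ | b < |t|} :=
    measurableSet_lt measurable_const continuous_abs.measurable
  set g : Fin d → ℝ → ℝ := Function.update (fun k t => (1 + |t|) ^ (-(l k) / 2)) j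
    ({t | b < |t|}.indicator fun t => (1 + |t|) ^ (-(l j) / 2)) with hg
  have hg0 : ∀ k t, 0 ≤ g k t := fun k t => by
    rcases eq_or_ne k j with rfl | hk
    · simp only [hg, Function.update_self]
      exact indicator_nonneg (fun t _ => by positivity) t
    · simp only [hg, Function.update_of_ne hk]
      positivity
  have hgint : ∀ k, Integrable (g k) := fun k => by
    rcases eq_or_ne k j with rfl | hk
    · simpa [hg] using (integrable_one_add_abs_rpow (by linarith [hexp k])).indicator htail
    · simpa [hg, Function.update_of_ne hk] using integrable_one_add_abs_rpow
        (by linarith [hexp k])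
  have hgbound : ∀ k, ∫ t, g k t ≤ Function.update (fun _ => (4 : ℝ)) j
      (2 * b ^ (1 - L / 2)) k := fun k => by
    rcases eq_or_ne k j with rfl | hk
    · simp only [hg, Function.update_self]
      rw [show 1 - L / 2 = -L / 2 + 1 by ring]
      exact integral_indicator_lt_abs_one_add_abs_rpow_le (by linarith) (by linarith [hLl k]) hb
    · simpa [hg, Function.update_of_ne hk] using integral_one_add_abs_rpow_le_four (hexp k)
  rw [← lintegral_indicator (measurableSet_lt measurable_const (by fun_prop)),
    indicator_lt_abs_apply_f_eq_prod, lintegral_ofReal_prod_eq hgint hg0]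
  refine ENNReal.ofReal_le_ofReal ?_
  calc ∏ k, ∫ t, g k t ≤ ∏ k, Function.update (fun _ => (4 : ℝ)) j (2 * b ^ (1 - L / 2)) k :=
        Finset.prod_le_prod (fun k _ => integral_nonneg (hg0 k)) fun k _ => hgbound k
    _ = 2 * b ^ (1 - L / 2) * 4 ^ (d - 1) := by
        simp [Finset.prod_update_of_mem, Finset.card_sdiff]

theorem setLIntegral_sqrt_mul_lt_norm_le {b : ℝ} (hb : 0 < b) :
    ∫⁻ x in {x : EuclideanSpace ℝ (Fin d) | √d * b < ‖x‖}, ENNReal.ofReal (f d l x)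
      ≤ d * ENNReal.ofReal (2 * b ^ (1 - L / 2) * 4 ^ (d - 1)) :=
  calc ∫⁻ x in {x : EuclideanSpace ℝ (Fin d) | √d * b < ‖x‖}, ENNReal.ofReal (f d l x)
      ≤ ∫⁻ x in ⋃ j, {x : EuclideanSpace ℝ (Fin d) | b < |x j|}, ENNReal.ofReal (f d l x) :=
        lintegral_mono_set fun x hx => mem_iUnion.2 (exists_lt_abs_of_sqrt_mul_lt_norm hb.le hx)
    _ ≤ ∑ j, ∫⁻ x in {x : EuclideanSpace ℝ (Fin d) | b < |x j|}, ENNReal.ofReal (f d l x) :=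
        (lintegral_iUnion_le _ _).trans_eq (tsum_fintype _)
    _ ≤ ∑ _j : Fin d, ENNReal.ofReal (2 * b ^ (1 - L / 2) * 4 ^ (d - 1)) :=
        Finset.sum_le_sum fun j _ => setLIntegral_lt_abs_apply_le hL hLl hb j
    _ = d * ENNReal.ofReal (2 * b ^ (1 - L / 2) * 4 ^ (d - 1)) := by simp

end Tail

section Sphere

instance : IsFiniteMeasure (sphμ d) := by
  unfold sphμ
  infer_instance

variable {d l}

theorem integrable_f_smul_sphere (ρ : ℝ) :
    Integrable (fun ω : sphere (0 : EuclideanSpace ℝ (Fin d)) 1 => f d l (ρ • (ω : _))) (sphμ d) :=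
  (continuous_f.comp (continuous_subtype_val.const_smul ρ)).integrable_of_hasCompactSupport
    (HasCompactSupport.of_compactSpace _)

theorem measureReal_mul_rpow_le_integral_sphere (hl : ∀ j, 0 ≤ l j) {L : ℝ} (hL : ∀ j, l j ≤ L)
    {ρ : ℝ} (hρ : 0 < ρ) :
    (sphμ d).real univ * (1 + ρ) ^ (-(d : ℝ) * L / 2)
      ≤ ∫ ω : sphere (0 : EuclideanSpace ℝ (Fin d)) 1, f d l (ρ • (ω : _)) ∂sphμ d := by
  rw [← smul_eq_mul, ← integral_const]
  refine integral_mono (integrable_const _) (integrable_f_smul_sphere ρ) fun ω => ?_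
  refine rpow_le_f_of_abs_le hl hL hρ.le fun j => ?_
  calc |(ρ • (ω : EuclideanSpace ℝ (Fin d))) j| ≤ ‖ρ • (ω : EuclideanSpace ℝ (Fin d))‖ :=
        (Real.norm_eq_abs _).symm.trans_le (PiLp.norm_apply_le _ j)
    _ = ρ := by simp [norm_smul, abs_of_pos hρ]

theorem ofReal_pow_mul_lintegral_sphere_le (hd : 0 < d) (hl : ∀ j, 0 ≤ l j) {ρ : ℝ}
    (hρ : 0 < ρ) :
    ENNReal.ofReal ((ρ / 2) ^ d) *
        ∫⁻ ω : sphere (0 : EuclideanSpace ℝ (Fin d)) 1, ENNReal.ofReal (f d l (ρ • (ω : _))) ∂sphμ d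
      ≤ ∫⁻ x in {x : EuclideanSpace ℝ (Fin d) | ρ / 2 < ‖x‖}, ENNReal.ofReal (f d l x) := by
  have : Nonempty (Fin d) := ⟨⟨0, hd⟩⟩
  have hshell : MeasurableSet {x : EuclideanSpace ℝ (Fin d) | ρ / 2 < ‖x‖} :=
    measurableSet_lt measurable_const continuous_norm.measurable
  set F := {x : EuclideanSpace ℝ (Fin d) | ρ / 2 < ‖x‖}.indicator fun x => ENNReal.ofReal (f d l x)
  rw [← lintegral_indicator hshell, lintegral_eq_lintegral_toSphere_lintegral_Ioi volume
    (continuous_f.measurable.ennreal_ofReal.indicator hshell), finrank_euclideanSpace_fin, sphμ,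
    ← lintegral_const_mul' _ _ ENNReal.ofReal_ne_top]
  refine lintegral_mono fun ω => ?_
  have hω : ‖(ω : EuclideanSpace ℝ (Fin d))‖ = 1 := norm_eq_of_mem_sphere ω
  have hradial : ∀ r ∈ Ioc (ρ / 2) ρ, ENNReal.ofReal ((ρ / 2) ^ (d - 1)) *
      ENNReal.ofReal (f d l (ρ • (ω : _))) ≤ ENNReal.ofReal (r ^ (d - 1)) * F (r • (ω : _)) := by
    intro r ⟨hr, hrρ⟩
    have hr0 : 0 < r := by linarith
    have hmem : r • (ω : EuclideanSpace ℝ (Fin d)) ∈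
        {x : EuclideanSpace ℝ (Fin d) | ρ / 2 < ‖x‖} := by
      simp [norm_smul, hω, abs_of_pos hr0, hr]
    rw [show F (r • (ω : _)) = ENNReal.ofReal (f d l (r • (ω : _))) from indicator_of_mem hmem _]
    gcongr
    refine f_le_of_abs_le hl fun j => ?_
    simp only [PiLp.smul_apply, smul_eq_mul, abs_mul, abs_of_pos hr0, abs_of_pos hρ]
    gcongr
  calc ENNReal.ofReal ((ρ / 2) ^ d) * ENNReal.ofReal (f d l (ρ • (ω : _)))
      = ∫⁻ _r in Ioc (ρ / 2) ρ, ENNReal.ofReal ((ρ / 2) ^ (d - 1)) *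
          ENNReal.ofReal (f d l (ρ • (ω : _))) := by
        rw [setLIntegral_const, Real.volume_Ioc, show ρ - ρ / 2 = ρ / 2 by ring,
          ← pow_sub_one_mul hd.ne', ENNReal.ofReal_mul (by positivity)]
        ring
    _ ≤ ∫⁻ r in Ioc (ρ / 2) ρ, ENNReal.ofReal (r ^ (d - 1)) * F (r • (ω : _)) :=
        setLIntegral_mono' measurableSet_Ioc hradial
    _ ≤ ∫⁻ r in Ioi 0, ENNReal.ofReal (r ^ (d - 1)) * F (r • (ω : _)) :=
        lintegral_mono_set fun r hr => lt_trans (by linarith) hr.1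

variable {L : ℝ} (hL : 4 ≤ L) (hLl : ∀ j, L ≤ l j)
include hL hLl

theorem pow_mul_integral_sphere_le (hd : 0 < d) {ρ : ℝ} (hρ : 0 < ρ) :
    (ρ / 2) ^ d * ∫ ω : sphere (0 : EuclideanSpace ℝ (Fin d)) 1, f d l (ρ • (ω : _)) ∂sphμ d
      ≤ d * (2 * (ρ / 2 / √d) ^ (1 - L / 2) * 4 ^ (d - 1)) := by
  have hl : ∀ j, 0 ≤ l j := fun j => by linarith [hLl j]
  have hsqrt : 0 < √(d : ℝ) := Real.sqrt_pos.2 (by exact_mod_cast hd)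
  have hshell := ofReal_pow_mul_lintegral_sphere_le hd hl hρ
  have htail := setLIntegral_sqrt_mul_lt_norm_le hL hLl (b := ρ / 2 / √d) (by positivity)
  rw [mul_div_cancel₀ _ hsqrt.ne'] at htail
  rw [← ofReal_integral_eq_lintegral_ofReal (integrable_f_smul_sphere ρ)
    (ae_of_all _ fun ω => f_nonneg _), ← ENNReal.ofReal_mul (by positivity)] at hshell
  rw [← ENNReal.ofReal_natCast, ← ENNReal.ofReal_mul (Nat.cast_nonneg _)] at htail
  exact (ENNReal.ofReal_le_ofReal_iff (by positivity)).1 (hshell.trans htail)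

theorem exists_integral_sphere_le_of_one_le (hd : 0 < d) :
    ∃ C, ∀ ρ, 1 ≤ ρ → ∫ ω : sphere (0 : EuclideanSpace ℝ (Fin d)) 1, f d l (ρ • (ω : _)) ∂sphμ d
      ≤ C * (1 + ρ) ^ (1 - (d : ℝ) - L / 2) := by
  have hsqrt : 0 < √(d : ℝ) := Real.sqrt_pos.2 (by exact_mod_cast hd)
  obtain ⟨K, hK, hscale⟩ : ∃ K : ℝ, 0 ≤ K ∧ ∀ R > 0,
      d * (2 * (R / √d) ^ (1 - L / 2) * 4 ^ (d - 1)) = K * R ^ (1 - L / 2) :=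
    ⟨d * (2 * √(d : ℝ) ^ (-(1 - L / 2)) * 4 ^ (d - 1)), by positivity, fun R hR => by
      rw [Real.div_rpow hR.le hsqrt.le, Real.rpow_neg hsqrt.le]
      ring⟩
  refine ⟨K * 4 ^ ((d : ℝ) - (1 - L / 2)), fun ρ hρ => ?_⟩
  have hR : 0 < ρ / 2 := by linarith
  have hexp : 1 - L / 2 - d ≤ 0 := by
    have : (0 : ℝ) ≤ d := Nat.cast_nonneg d
    linarith
  calc ∫ ω : sphere (0 : EuclideanSpace ℝ (Fin d)) 1, f d l (ρ • (ω : _)) ∂sphμ d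
      ≤ K * (ρ / 2) ^ (1 - L / 2) / (ρ / 2) ^ (d : ℝ) := by
        rw [le_div_iff₀ (by positivity), mul_comm, Real.rpow_natCast, ← hscale _ hR]
        exact pow_mul_integral_sphere_le hL hLl hd (by linarith)
    _ = K * (ρ / 2) ^ (1 - L / 2 - d) := by rw [mul_div_assoc, ← Real.rpow_sub hR]
    _ ≤ K * ((1 + ρ) / 4) ^ (1 - L / 2 - d) :=
        mul_le_mul_of_nonneg_left (Real.rpow_le_rpow_of_nonpos (by positivity) (by linarith) hexp)
          hK
    _ = K * 4 ^ ((d : ℝ) - (1 - L / 2)) * (1 + ρ) ^ (1 - (d : ℝ) - L / 2) := by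
        rw [Real.div_rpow (by positivity) (by norm_num), div_eq_mul_inv, ← Real.rpow_neg
          (by norm_num), neg_sub]
        ring_nf

theorem exists_integral_sphere_le (hd : 0 < d) :
    ∃ C > 0, ∀ ρ > 0, ∫ ω : sphere (0 : EuclideanSpace ℝ (Fin d)) 1, f d l (ρ • (ω : _)) ∂sphμ d
      ≤ C * (1 + ρ) ^ (1 - (d : ℝ) - L / 2) := by
  have hl : ∀ j, 0 ≤ l j := fun j => by linarith [hLl j]
  obtain ⟨C₁, hC₁⟩ := exists_integral_sphere_le_of_one_le hL hLl hd
  have he : 1 - (d : ℝ) - L / 2 ≤ 0 := by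
    have : (0 : ℝ) ≤ d := Nat.cast_nonneg d
    linarith
  set e := 1 - (d : ℝ) - L / 2
  set σ := (sphμ d).real univ
  refine ⟨max (max C₁ (σ * 2 ^ (-e))) 1, by positivity, fun ρ hρ => ?_⟩
  rcases le_total ρ 1 with hρ1 | hρ1
  · have hone : 1 ≤ 2 ^ (-e) * (1 + ρ) ^ e := by
      rw [Real.rpow_neg (by norm_num), inv_mul_eq_div, ← Real.div_rpow (by linarith)
        (by norm_num)]
      exact Real.one_le_rpow_of_pos_of_le_one_of_nonpos (by positivity) (by linarith) he
    calc ∫ ω : sphere (0 : EuclideanSpace ℝ (Fin d)) 1, f d l (ρ • (ω : _)) ∂sphμ d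
        ≤ ∫ _ω : sphere (0 : EuclideanSpace ℝ (Fin d)) 1, (1 : ℝ) ∂sphμ d :=
          integral_mono (integrable_f_smul_sphere ρ) (integrable_const _)
            fun ω => f_le_one hl _
      _ = σ := by simp [σ]
      _ ≤ σ * 2 ^ (-e) * (1 + ρ) ^ e := by
          rw [mul_assoc]
          exact le_mul_of_one_le_right measureReal_nonneg hone
      _ ≤ max (max C₁ (σ * 2 ^ (-e))) 1 * (1 + ρ) ^ e := by gcongr; simp
  · calc ∫ ω : sphere (0 : EuclideanSpace ℝ (Fin d)) 1, f d l (ρ • (ω : _)) ∂sphμ d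
        ≤ C₁ * (1 + ρ) ^ e := hC₁ ρ hρ1
      _ ≤ max (max C₁ (σ * 2 ^ (-e))) 1 * (1 + ρ) ^ e := by gcongr; simp

end Sphere

theorem statement9 (hd : 1 ≤ d) (hl4 : ∀ j, 4 ≤ l j) (hmono : Monotone l) :
    (∀ x y : EuclideanSpace ℝ (Fin d), f d l x * f d l y ≤ f d l (x + y)) ∧
    (∃ C > (0 : ℝ), ∀ ρ : ℝ, 0 < ρ →
      ((sphμ d) Set.univ).toReal * (1 + ρ) ^ (-(d : ℝ) * l ⟨d - 1, Nat.sub_lt hd one_pos⟩ / 2) ≤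
        (∫ ω : Metric.sphere (0 : EuclideanSpace ℝ (Fin d)) 1,
          f d l (WithLp.toLp 2 (fun j => ρ * (ω : EuclideanSpace ℝ (Fin d)) j)) ∂(sphμ d)) ∧
      (∫ ω : Metric.sphere (0 : EuclideanSpace ℝ (Fin d)) 1,
          f d l (WithLp.toLp 2 (fun j => ρ * (ω : EuclideanSpace ℝ (Fin d)) j)) ∂(sphμ d)) ≤
        C * (1 + ρ) ^ (1 - (d : ℝ) - l ⟨0, hd⟩ / 2)) := by
  have hl : ∀ j, 0 ≤ l j := fun j => by linarith [hl4 j]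
  have hmax : ∀ j, l j ≤ l ⟨d - 1, Nat.sub_lt hd one_pos⟩ := fun j =>
    hmono (Fin.mk_le_mk.2 (by omega) : j ≤ _)
  obtain ⟨C, hC, hupper⟩ := exists_integral_sphere_le (hl4 ⟨0, hd⟩)
    (fun j => hmono (Fin.mk_le_mk.2 (Nat.zero_le _) : ⟨0, hd⟩ ≤ j)) hd
  exact ⟨f_mul_le_f_add hl, C, hC, fun ρ hρ =>
    ⟨measureReal_mul_rpow_le_integral_sphere hl hmax hρ, hupper ρ hρ⟩⟩

end Stmt9
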